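/- For every finite string W over {A, X, B}, the following identities hold among open values in the tight puzzle, where concatenation is denoted by juxtaposition: (1) |WAAA| + t|W| = 0; (2) |WXAA| − t|W| = 0; (3) |WXXA| + t|W| = 0; (4) |WAXA| − t|WA| − 2t|W| = 0; (5) |WABA| + t|WA| + t|W| = 0. -/

import Mathlib

/-!
The "tight puzzle" of Schwartz–Tabachnikov.  Strings over the alphabet `{A, X, B}`;
word list (coefficient, weight): `X (1,0)`, `XA (1,1)`, `XAA (1,1)`, `AXA (2,1)`,
`AAA (-1,1)`, `BA (-1,1)`, `ABA (-1,1)`, `XXA (-1,1)`; in a parsing the word `X` may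
never be immediately followed by the word `XA` or the word `BA`.
-/

open scoped Classical

/-- The three-letter alphabet. -/
inductive PLetter | A | X | B
deriving DecidableEq

/-- Strings over the alphabet. -/
abbrev PWord := List PLetter

/-- The tight puzzle word list. -/
def tightWords : List PWord :=
  [[PLetter.X], [PLetter.X, PLetter.A], [PLetter.X, PLetter.A, PLetter.A],
   [PLetter.A, PLetter.X, PLetter.A], [PLetter.A, PLetter.A, PLetter.A],
   [PLetter.B, PLetter.A], [PLetter.A, PLetter.B, PLetter.A],
   [PLetter.X, PLetter.X, PLetter.A]]

/-- Coefficients of the words of the tight puzzle (`AXA ↦ 2`; `AAA, BA, ABA, XXA ↦ -1`;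
`X, XA, XAA ↦ 1`). -/
def tightCoeff (w : PWord) : ℤ :=
  if w = [PLetter.A, PLetter.X, PLetter.A] then 2
  else if w = [PLetter.A, PLetter.A, PLetter.A] ∨ w = [PLetter.B, PLetter.A] ∨
      w = [PLetter.A, PLetter.B, PLetter.A] ∨ w = [PLetter.X, PLetter.X, PLetter.A] then -1
  else 1

/-- Weights of the words: the word `X` has weight `0`, all other words weight `1`. -/
def wordWt (w : PWord) : ℕ := if w = [PLetter.X] then 0 else 1

/-- The forbidden adjacency: the word `X` immediately followed by `XA` or `BA`. -/
def Bad (u v : PWord) : Prop :=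
  u = [PLetter.X] ∧ (v = [PLetter.X, PLetter.A] ∨ v = [PLetter.B, PLetter.A])

/-- The contribution `coefficient · t^weight ∈ ℤ[t]` of a parsing `L`. -/
noncomputable def parseVal (c : PWord → ℤ) (L : List PWord) : Polynomial ℤ :=
  Polynomial.C ((L.map c).prod) * Polynomial.X ^ ((L.map wordWt).sum)

/-- `L` is a parsing in the tight puzzle: all its words are on the word list and the
forbidden adjacency never occurs. -/
def TightChain (L : List PWord) : Prop :=
  (∀ w ∈ L, w ∈ tightWords) ∧ List.Chain' (fun u v => ¬ Bad u v) L

/-- The *core* of a string: what remains after deleting all leading and trailing `X`s. -/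
def core (s : PWord) : PWord :=
  ((s.dropWhile (· == PLetter.X)).reverse.dropWhile (· == PLetter.X)).reverse

/-- `L` is a parsing of the bi-infinite string `⋯XX·W·XX⋯` (with the infinitely many
padding `X`s parsed as copies of the word `X` and trimmed away): the words of `L`
concatenate to `W` up to padding by `X`s on either side, `L` neither starts nor ends
with the word `X`, and (because of the padding `X`-words on the left) the first word
of `L` is not `XA` or `BA`. -/
def IsOpenParsing (W : PWord) (L : List PWord) : Prop :=
  TightChain L ∧ core L.flatten = core W ∧
  ∀ h : L ≠ [],
    L.head h ≠ [PLetter.X] ∧ L.head h ≠ [PLetter.X, PLetter.A] ∧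
    L.head h ≠ [PLetter.B, PLetter.A] ∧ L.getLast h ≠ [PLetter.X]

/-- `(r, L)` is a parsing of the cyclic string `(W)`: reading the necklace of the
letters of `W` starting at position `r`, the words of `L` concatenate to it, the
forbidden adjacency does not occur (cyclically), and `r < (last word).length`
(so that every parsing of the necklace is counted exactly once). -/
def IsCyclicParsing (W : PWord) (r : ℕ) (L : List PWord) : Prop :=
  TightChain L ∧
  ∃ h : L ≠ [], L.flatten = W.rotate r ∧ r < (L.getLast h).length ∧
    ¬ Bad (L.getLast h) (L.head h)

/-- `L` is a parsing of the locked string `[W]`: the words of `L` concatenate exactly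
to `W`, no padding allowed. -/
def IsLockedParsing (W : PWord) (L : List PWord) : Prop :=
  TightChain L ∧ L.flatten = W

/-- The nine words of both puzzles, as a function (used to enumerate parsings). -/
def wordOf : Fin 9 → PWord :=
  ![[PLetter.X], [PLetter.X, PLetter.A], [PLetter.X, PLetter.A, PLetter.A],
    [PLetter.X, PLetter.B, PLetter.A], [PLetter.A, PLetter.X, PLetter.A],
    [PLetter.A, PLetter.A, PLetter.A], [PLetter.B, PLetter.A],
    [PLetter.A, PLetter.B, PLetter.A], [PLetter.X, PLetter.X, PLetter.A]]

/-- The open value `|W| ∈ ℤ[t]`: the sum of `coefficient · t^weight` over all parsings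
of the bi-infinite string `⋯XX·W·XX⋯` (any such parsing consists of at most
`W.length + 2` words). -/
noncomputable def openVal (W : PWord) : Polynomial ℤ :=
  ∑ k ∈ Finset.range (W.length + 3), ∑ f : Fin k → Fin 9,
    if IsOpenParsing W ((List.ofFn f).map wordOf) then
      parseVal tightCoeff ((List.ofFn f).map wordOf)
    else 0

/-- The cyclic value `|(W)| ∈ ℤ[t]`: the sum of `coefficient · t^weight` over all
parsings of the cyclic string `(W)`. -/
noncomputable def cycVal (W : PWord) : Polynomial ℤ :=
  ∑ r ∈ Finset.range W.length, ∑ k ∈ Finset.range (W.length + 1), ∑ f : Fin k → Fin 9,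
    if IsCyclicParsing W r ((List.ofFn f).map wordOf) then
      parseVal tightCoeff ((List.ofFn f).map wordOf)
    else 0

/-- The locked value `|[W]| ∈ ℤ[t]`: the sum of `coefficient · t^weight` over all
parsings whose concatenation is exactly `W`. -/
noncomputable def lockVal (W : PWord) : Polynomial ℤ :=
  ∑ k ∈ Finset.range (W.length + 1), ∑ f : Fin k → Fin 9,
    if IsLockedParsing W ((List.ofFn f).map wordOf) then
      parseVal tightCoeff ((List.ofFn f).map wordOf)
    else 0

/-!
Cut the bi-infinite string `⋯XX·W·XX⋯` at the right end of `W` and parse only the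
left-infinite string `⋯XX·W`. Its value equals the open value `|W|`: the trailing `X`s of `W`
can only be read as copies of the word `X`, of value `1`. The last word of a parsing of
`⋯XX·W·s`, for `s` of length `3` ending in `A`, is a word of the list that is a suffix
`w` of `s = s'·w`, and what precedes it is a parsing of `⋯XX·W·s'`. This gives
`|W·s| = ∑ coeff(w) t^weight(w) |W·s'|`, except that the forbidden adjacency removes the terms
`w = XA, BA` exactly when `s'` ends in `X`. For `s = AAA, XAA, XXA, AXA, ABA` this is the claim.
-/

namespace TightPuzzle

open PLetter

def dropX (s : PWord) : PWord := s.dropWhile (· == X)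

lemma dropX_append (s t : PWord) :
    dropX (s ++ t) = if dropX s = [] then dropX t else dropX s ++ t := by
  unfold dropX
  rw [List.dropWhile_append]
  split_ifs <;> simp_all

lemma dropX_eq_nil_iff {s : PWord} : dropX s = [] ↔ ∀ c ∈ s, c = X := by
  simp [dropX, List.dropWhile_eq_nil_iff]

lemma dropX_dropX (s : PWord) : dropX (dropX s) = dropX s :=
  List.dropWhile_idempotent _ _

lemma dropX_suffix (s : PWord) : dropX s <:+ s := List.dropWhile_suffix _

lemma head?_dropX_ne (s : PWord) : (dropX s).head? ≠ some X := by
  intro h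
  have hne : dropX s ≠ [] := by rintro h0; simp [h0] at h
  have := List.head_dropWhile_not (· == X) hne
  rw [List.head?_eq_some_head hne] at h
  simp_all [dropX]

lemma exists_eq_replicate_append_dropX (s : PWord) : ∃ n, s = List.replicate n X ++ dropX s := by
  refine ⟨(s.takeWhile (· == X)).length, ?_⟩
  conv_lhs => rw [← List.takeWhile_append_dropWhile (p := (· == X)) (l := s)]
  congr 1
  exact List.eq_replicate_iff.mpr ⟨rfl, fun c hc => by simpa using List.mem_takeWhile_imp hc⟩

lemma getLast?_dropX {s : PWord} (h : dropX s ≠ []) : (dropX s).getLast? = s.getLast? := by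
  obtain ⟨n, hn⟩ := exists_eq_replicate_append_dropX s
  conv_rhs => rw [hn]
  rw [List.getLast?_append]
  cases hl : (dropX s).getLast? with
  | none => exact absurd (List.getLast?_eq_none_iff.mp hl) h
  | some _ => rfl

lemma dropX_append_left_inj {s t u : PWord} :
    dropX (s ++ u) = dropX (t ++ u) ↔ dropX s = dropX t := by
  refine ⟨fun h => ?_, fun h => by rw [dropX_append, dropX_append, h]⟩
  have hu := (dropX_suffix u).length_le
  rw [dropX_append, dropX_append] at h
  split_ifs at h with hs ht ht
  · rw [hs, ht]
  · have := congrArg List.length h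
    simp only [List.length_append] at this
    have := List.length_pos_iff.mpr ht
    omega
  · have := congrArg List.length h
    simp only [List.length_append] at this
    have := List.length_pos_iff.mpr hs
    omega
  · exact List.append_cancel_right h

lemma suffix_or_suffix_of_dropX_eq {s t : PWord} (h : dropX s = dropX t) : s <:+ t ∨ t <:+ s := by
  obtain ⟨m, hm⟩ := exists_eq_replicate_append_dropX s
  obtain ⟨n, hn⟩ := exists_eq_replicate_append_dropX t
  have key : ∀ {i j : ℕ}, i ≤ j →
      List.replicate i X ++ dropX t <:+ List.replicate j X ++ dropX t := fun {i j} hij =>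
    ⟨List.replicate (j - i) X, by
      rw [← List.append_assoc, ← List.replicate_add, Nat.sub_add_cancel hij]⟩
  rw [hm, hn, h]
  rcases le_total m n with hmn | hnm
  exacts [Or.inl (key hmn), Or.inr (key hnm)]

lemma core_eq_rdropWhile (s : PWord) : core s = (dropX s).rdropWhile (· == X) := rfl

lemma exists_dropX_eq_core_append (s : PWord) : ∃ m, dropX s = core s ++ List.replicate m X := by
  refine ⟨((dropX s).rtakeWhile (· == X)).length, ?_⟩
  conv_lhs => rw [← List.rdropWhile_append_rtakeWhile (p := (· == X)) (l := dropX s)]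
  rw [core_eq_rdropWhile]
  congr 1
  exact List.eq_replicate_iff.mpr ⟨rfl, fun c hc => by simpa using List.mem_rtakeWhile_imp hc⟩

lemma length_core_le (s : PWord) : (core s).length ≤ s.length := by
  obtain ⟨m, hm⟩ := exists_dropX_eq_core_append s
  have := congrArg List.length hm
  have := (dropX_suffix s).length_le
  simp only [List.length_append] at *
  omega

lemma core_eq_dropX {s : PWord} (h : s.getLast? ≠ some X) : core s = dropX s := by
  rw [core_eq_rdropWhile, List.rdropWhile_eq_self_iff]
  intro hne hlast
  rw [← getLast?_dropX hne, List.getLast?_eq_some_getLast hne] at h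
  simp_all

lemma dropX_core (s : PWord) : dropX (core s) = core s := by
  obtain ⟨m, hm⟩ := exists_dropX_eq_core_append s
  have h := dropX_dropX s
  rw [hm, dropX_append, dropX_eq_nil_iff.mpr (fun c hc => List.eq_of_mem_replicate hc)] at h
  split_ifs at h with hc
  · rw [hc, (List.append_eq_nil_iff.mp h.symm).1]
  · exact List.append_cancel_right h

lemma getLast?_core_ne (s : PWord) : (core s).getLast? ≠ some X := by
  intro h
  have hne : core s ≠ [] := by rintro h0; simp [h0] at h
  have := List.rdropWhile_last_not (· == X) (dropX s) hne
  rw [List.getLast?_eq_some_getLast hne, Option.some_inj] at h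
  exact this (beq_iff_eq.mpr h)

lemma X_mem_tightWords : [X] ∈ tightWords := by decide

lemma ne_nil_of_mem_tightWords : ∀ w ∈ tightWords, w ≠ [] := by decide

lemma length_le_three_of_mem_tightWords : ∀ w ∈ tightWords, w.length ≤ 3 := by decide

lemma dropX_ne_nil_of_mem_tightWords : ∀ w ∈ tightWords, w ≠ [X] → dropX w ≠ [] := by decide

lemma getLast?_eq_X_iff_of_mem_tightWords :
    ∀ w ∈ tightWords, w.getLast? = some X ↔ w = [X] := by decide

lemma length_le_length_flatten {α : Type*} {L : List (List α)} (h : ∀ w ∈ L, w ≠ []) :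
    L.length ≤ L.flatten.length := by
  induction L with
  | nil => simp
  | cons w L ih =>
    have hw := List.length_pos_iff.mpr (h w (by simp))
    have := ih (fun v hv => h v (by simp [hv]))
    simp only [List.length_cons, List.flatten_cons, List.length_append]
    omega

lemma exists_wordOf_eq_of_mem_tightWords : ∀ w ∈ tightWords, ∃ i, wordOf i = w := by decide

lemma wordOf_injective : Function.Injective wordOf := by decide

lemma bad_iff {u v : PWord} : Bad u v ↔ u = [X] ∧ Bad [X] v := by simp [Bad]

lemma not_bad_X_right (u : PWord) : ¬ Bad u [X] := by simp [Bad]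

/-- `L` parses the left-infinite string `⋯XX·U`: the padding `X`-words are left out of `L`,
but the one just before `L` takes part in the chain condition. -/
def IsLeftOpenParsing (U : PWord) (L : List PWord) : Prop :=
  TightChain ([X] :: L) ∧ L.head? ≠ some [X] ∧ dropX L.flatten = dropX U

lemma tightChain_X_cons_iff {L : List PWord} :
    TightChain ([X] :: L) ↔ TightChain L ∧ ∀ w ∈ L.head?, ¬ Bad [X] w := by
  constructor
  · rintro ⟨hw, hc⟩
    obtain ⟨hh, hc⟩ := List.isChain_cons.mp hc
    exact ⟨⟨fun w hw' => hw w (List.mem_cons_of_mem _ hw'), hc⟩, hh⟩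
  · rintro ⟨⟨hw, hc⟩, hh⟩
    exact ⟨List.forall_mem_cons.mpr ⟨X_mem_tightWords, hw⟩, List.isChain_cons.mpr ⟨hh, hc⟩⟩

lemma tightChain_append_singleton_iff {L : List PWord} {w : PWord} :
    TightChain (L ++ [w]) ↔ TightChain L ∧ w ∈ tightWords ∧ ∀ x ∈ L.getLast?, ¬ Bad x w := by
  have hc : List.IsChain (fun u v => ¬ Bad u v) (L ++ [w]) ↔
      List.IsChain (fun u v => ¬ Bad u v) L ∧ ∀ x ∈ L.getLast?, ¬ Bad x w := by
    simp [List.isChain_append]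
  unfold TightChain
  simp only [List.mem_append, List.mem_singleton, or_imp, forall_and, forall_eq]
  exact ⟨fun ⟨⟨h₁, h₂⟩, h₃⟩ => ⟨⟨h₁, (hc.mp h₃).1⟩, h₂, (hc.mp h₃).2⟩,
    fun ⟨⟨h₁, h₃⟩, h₂, h₄⟩ => ⟨⟨h₁, h₂⟩, hc.mpr ⟨h₃, h₄⟩⟩⟩

lemma isLeftOpenParsing_dropX_iff {U : PWord} {L : List PWord} :
    IsLeftOpenParsing (dropX U) L ↔ IsLeftOpenParsing U L := by
  rw [IsLeftOpenParsing, IsLeftOpenParsing, dropX_dropX]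

namespace IsLeftOpenParsing

variable {U : PWord} {L : List PWord}

lemma mem_tightWords (h : IsLeftOpenParsing U L) {w : PWord} (hw : w ∈ L) : w ∈ tightWords :=
  h.1.1 w (List.mem_cons_of_mem _ hw)

lemma length_le_length_dropX_flatten (h : IsLeftOpenParsing U L) :
    L.length ≤ (dropX L.flatten).length := by
  rcases L with _ | ⟨w, L'⟩
  · simp
  have hw : dropX w ≠ [] := dropX_ne_nil_of_mem_tightWords w (h.mem_tightWords (by simp))
    (fun hX => h.2.1 (by simp [hX]))
  have hL' := length_le_length_flatten (L := L')
    (fun v hv => ne_nil_of_mem_tightWords v (h.mem_tightWords (List.mem_cons_of_mem _ hv)))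
  have := List.length_pos_iff.mpr hw
  rw [List.flatten_cons, dropX_append, if_neg hw, List.length_append, List.length_cons]
  omega

lemma length_le (h : IsLeftOpenParsing U L) : L.length ≤ U.length :=
  h.length_le_length_dropX_flatten.trans (h.2.2 ▸ (dropX_suffix U).length_le)

lemma dropX_flatten_ne_nil (h : IsLeftOpenParsing U L) (hL : L ≠ []) : dropX L.flatten ≠ [] := by
  intro h₀
  have := h.length_le_length_dropX_flatten
  rw [h₀, List.length_nil, Nat.le_zero, List.length_eq_zero_iff] at this
  exact hL this

lemma eq_nil_iff (h : IsLeftOpenParsing U L) : L = [] ↔ dropX U = [] := by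
  rw [← h.2.2]
  refine ⟨fun hL => by simp [hL, dropX], fun hU => ?_⟩
  by_contra hL
  exact h.dropX_flatten_ne_nil hL hU

lemma getLast?_getD_eq_X_iff (h : IsLeftOpenParsing U L) :
    L.getLast?.getD [X] = [X] ↔ U.getLast?.getD X = X := by
  rcases List.eq_nil_or_concat' L with rfl | ⟨L₀, w, rfl⟩
  · have hU := dropX_eq_nil_iff.mp (h.eq_nil_iff.mp rfl)
    simp only [List.getLast?_nil, Option.getD_none, true_iff]
    cases hl : U.getLast? with
    | none => rfl
    | some c => exact hU c (List.mem_of_getLast? hl)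
  · have hw := h.mem_tightWords (List.mem_append_right _ (List.mem_singleton_self w))
    have hne := h.dropX_flatten_ne_nil (by simp)
    have hw₀ := ne_nil_of_mem_tightWords w hw
    obtain ⟨c, hc⟩ := Option.ne_none_iff_exists'.mp (mt List.getLast?_eq_none_iff.mp hw₀)
    have hlast : U.getLast? = some c := by
      rw [← getLast?_dropX (h.2.2 ▸ hne), ← h.2.2, getLast?_dropX hne, List.flatten_append,
        List.flatten_singleton, List.getLast?_append, hc]
      rfl
    rw [List.getLast?_concat, hlast, Option.getD_some, Option.getD_some,
      ← getLast?_eq_X_iff_of_mem_tightWords w hw, hc, Option.some_inj]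

end IsLeftOpenParsing

lemma isLeftOpenParsing_append_singleton_iff {U w : PWord} {L : List PWord} :
    IsLeftOpenParsing (U ++ w) (L ++ [w]) ↔ IsLeftOpenParsing U L ∧ w ∈ tightWords ∧
      ¬ Bad (L.getLast?.getD [X]) w ∧ (L = [] → w ≠ [X]) := by
  have hhead : (L ++ [w]).head? ≠ some [X] ↔ L.head? ≠ some [X] ∧ (L = [] → w ≠ [X]) := by
    cases L <;> simp
  rw [IsLeftOpenParsing, IsLeftOpenParsing, ← List.cons_append, tightChain_append_singleton_iff,
    hhead, List.flatten_concat, dropX_append_left_inj, List.getLast?_cons]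
  simp only [Option.mem_def, Option.some.injEq, forall_eq']
  tauto

lemma isLeftOpenParsing_append_X_iff {V : PWord} (hV : dropX V ≠ []) {L : List PWord} :
    IsLeftOpenParsing (V ++ [X]) L ↔ ∃ L₀, L = L₀ ++ [[X]] ∧ IsLeftOpenParsing V L₀ := by
  constructor
  · intro h
    have hL : L ≠ [] := fun hL => by
      have := h.eq_nil_iff.mp hL
      rw [dropX_append, if_neg hV] at this
      simp at this
    obtain ⟨L₀, w, rfl⟩ := (List.eq_nil_or_concat' L).resolve_left hL
    obtain rfl : w = [X] := by simpa using h.getLast?_getD_eq_X_iff.mpr (by simp)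
    exact ⟨L₀, rfl, (isLeftOpenParsing_append_singleton_iff.mp h).1⟩
  · rintro ⟨L₀, rfl, h₀⟩
    exact isLeftOpenParsing_append_singleton_iff.mpr ⟨h₀, X_mem_tightWords, not_bad_X_right _,
      fun hL => absurd (h₀.eq_nil_iff.mp hL) hV⟩

lemma isLeftOpenParsing_append_replicate_X_iff {V : PWord} (hV : dropX V ≠ []) (m : ℕ)
    {L : List PWord} :
    IsLeftOpenParsing (V ++ List.replicate m X) L ↔
      ∃ L₀, L = L₀ ++ List.replicate m [X] ∧ IsLeftOpenParsing V L₀ := by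
  induction m generalizing L with
  | zero => simp
  | succ m ih =>
    have hVm : dropX (V ++ List.replicate m X) ≠ [] := by
      rw [dropX_append, if_neg hV]
      exact List.append_ne_nil_of_left_ne_nil hV _
    rw [List.replicate_succ', ← List.append_assoc, isLeftOpenParsing_append_X_iff hVm]
    constructor
    · rintro ⟨L₁, rfl, h₁⟩
      obtain ⟨L₀, rfl, h₀⟩ := ih.mp h₁
      exact ⟨L₀, by rw [List.replicate_succ', List.append_assoc], h₀⟩
    · rintro ⟨L₀, rfl, h₀⟩
      exact ⟨L₀ ++ List.replicate m [X], by rw [List.replicate_succ', List.append_assoc],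
        ih.mpr ⟨L₀, rfl, h₀⟩⟩

lemma core_flatten_eq_dropX {L : List PWord} (hL : ∀ w ∈ L, w ∈ tightWords)
    (hlast : L.getLast? ≠ some [X]) : core L.flatten = dropX L.flatten := by
  rcases List.eq_nil_or_concat' L with rfl | ⟨L₀, w, rfl⟩
  · rfl
  have hw : w ∈ tightWords := hL w (by simp)
  apply core_eq_dropX
  rw [List.flatten_concat, List.getLast?_append_of_ne_nil _ (ne_nil_of_mem_tightWords w hw), Ne,
    getLast?_eq_X_iff_of_mem_tightWords w hw]
  simpa using hlast

lemma IsLeftOpenParsing.getLast?_ne_X_of_core {W : PWord} {L : List PWord}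
    (h : IsLeftOpenParsing (core W) L) : L.getLast? ≠ some [X] := by
  intro hl
  have hne : L ≠ [] := by rintro rfl; simp at hl
  have hcore : (core W).getLast?.getD X = X := h.getLast?_getD_eq_X_iff.mp (by simp [hl])
  have hW : core W = [] := by
    cases hc : (core W).getLast? with
    | none => exact List.getLast?_eq_none_iff.mp hc
    | some c =>
      rw [hc, Option.getD_some] at hcore
      exact absurd (hcore ▸ hc) (getLast?_core_ne W)
  exact hne (h.eq_nil_iff.mpr (by rw [hW]; rfl))

lemma isOpenParsing_iff {W : PWord} {L : List PWord} :
    IsOpenParsing W L ↔ IsLeftOpenParsing (core W) L := by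
  have hnotBad : ∀ w : PWord, ¬ Bad [X] w ↔ w ≠ [X, A] ∧ w ≠ [B, A] := by simp [Bad]
  constructor
  · rintro ⟨hC, hcore, hends⟩
    have hlast : L.getLast? ≠ some [X] := by
      intro h
      have hne : L ≠ [] := by rintro rfl; simp at h
      rw [List.getLast?_eq_some_getLast hne, Option.some_inj] at h
      exact (hends hne).2.2.2 h
    refine ⟨tightChain_X_cons_iff.mpr ⟨hC, fun w hw => ?_⟩, fun hh => ?_, ?_⟩
    · have hne : L ≠ [] := by rintro rfl; simp at hw
      rw [List.head?_eq_some_head hne, Option.mem_def, Option.some_inj] at hw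
      subst hw
      exact (hnotBad _).mpr ⟨(hends hne).2.1, (hends hne).2.2.1⟩
    · have hne : L ≠ [] := by rintro rfl; simp at hh
      rw [List.head?_eq_some_head hne, Option.some_inj] at hh
      exact (hends hne).1 hh
    · rw [dropX_core, ← hcore, core_flatten_eq_dropX hC.1 hlast]
  · intro h
    obtain ⟨hC, hhead⟩ := tightChain_X_cons_iff.mp h.1
    have hlast := h.getLast?_ne_X_of_core
    refine ⟨hC, by rw [core_flatten_eq_dropX hC.1 hlast, h.2.2, dropX_core], fun hne => ?_⟩
    have hw := (hnotBad _).mp (hhead (L.head hne) (List.head?_eq_some_head hne))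
    exact ⟨fun hX => h.2.1 (by rw [List.head?_eq_some_head hne, hX]), hw.1, hw.2,
      fun hX => hlast (by rw [List.getLast?_eq_some_getLast hne, hX])⟩

lemma exists_isLeftOpenParsing_iff_isOpenParsing (W : PWord) :
    ∃ m, ∀ L, IsLeftOpenParsing W L ↔
      ∃ L₁, L = L₁ ++ List.replicate m [X] ∧ IsOpenParsing W L₁ := by
  obtain ⟨m, hm⟩ := exists_dropX_eq_core_append W
  simp_rw [isOpenParsing_iff, ← isLeftOpenParsing_dropX_iff (U := W), hm]
  by_cases hc : core W = []
  · obtain rfl : m = 0 := by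
      have := head?_dropX_ne W
      rw [hm, hc] at this
      cases m <;> simp_all [List.replicate_succ]
    exact ⟨0, fun L => by simp⟩
  · exact ⟨m, fun L => isLeftOpenParsing_append_replicate_X_iff (by rwa [dropX_core]) m⟩

lemma rdrop_append_of_suffix {w s : PWord} (h : w <:+ s) : s.rdrop w.length ++ w = s := by
  obtain ⟨t, rfl⟩ := h
  simp [List.rdrop]

lemma ne_X_of_suffix {w s : PWord} (h : w <:+ s) (hA : s.getLast? = some A) : w ≠ [X] := by
  rintro rfl
  obtain ⟨t, rfl⟩ := h
  simp at hA

lemma isLeftOpenParsing_append_iff {W s : PWord} (hs : 3 ≤ s.length) (hA : s.getLast? = some A)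
    {L : List PWord} :
    IsLeftOpenParsing (W ++ s) L ↔ ∃ w ∈ tightWords, w <:+ s ∧ ∃ L₀, L = L₀ ++ [w] ∧
      IsLeftOpenParsing (W ++ s.rdrop w.length) L₀ ∧ ¬ Bad (L₀.getLast?.getD [X]) w := by
  constructor
  · intro h
    have hne : dropX (W ++ s) ≠ [] := fun h0 => by
      cases dropX_eq_nil_iff.mp h0 A (List.mem_append_right W (List.mem_of_getLast? hA))
    obtain ⟨L₀, w, rfl⟩ := (List.eq_nil_or_concat' L).resolve_left (mt h.eq_nil_iff.mp hne)
    have hw : w ∈ tightWords := h.mem_tightWords (by simp)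
    have hws : w <:+ s := by
      have h₁ : w <:+ (L₀ ++ [w]).flatten := by
        rw [List.flatten_concat]; exact List.suffix_append _ _
      have h₂ : s <:+ W ++ s := List.suffix_append _ _
      have hlen : w.length ≤ s.length := (length_le_three_of_mem_tightWords w hw).trans hs
      rcases suffix_or_suffix_of_dropX_eq h.2.2 with h₃ | h₃
      · exact List.suffix_of_suffix_length_le (h₁.trans h₃) h₂ hlen
      · exact List.suffix_of_suffix_length_le h₁ (h₂.trans h₃) hlen
    refine ⟨w, hw, hws, L₀, rfl, ?_⟩
    rw [← rdrop_append_of_suffix hws, ← List.append_assoc] at h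
    obtain ⟨h₀, -, hbad, -⟩ := isLeftOpenParsing_append_singleton_iff.mp h
    exact ⟨h₀, hbad⟩
  · rintro ⟨w, hw, hws, L₀, rfl, h₀, hbad⟩
    rw [← rdrop_append_of_suffix hws, ← List.append_assoc]
    exact isLeftOpenParsing_append_singleton_iff.mpr ⟨h₀, hw, hbad, fun _ => ne_X_of_suffix hws hA⟩

def candidates (n : ℕ) : Finset (List PWord) :=
  ((Finset.range n).sigma fun k => (Finset.univ : Finset (Fin k → Fin 9))).image
    fun p => (List.ofFn p.2).map wordOf

lemma mem_candidates_of_length_lt {n : ℕ} {L : List PWord} (hn : L.length < n)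
    (hL : ∀ w ∈ L, w ∈ tightWords) : L ∈ candidates n := by
  choose f hf using fun i : Fin L.length =>
    exists_wordOf_eq_of_mem_tightWords L[i] (hL _ (List.getElem_mem _))
  refine Finset.mem_image.mpr ⟨⟨L.length, f⟩, by simp [hn], ?_⟩
  exact List.ext_getElem (by simp) fun i _ _ => by simp [hf]

lemma openVal_eq_sum (W : PWord) :
    openVal W = ∑ L ∈ (candidates (W.length + 3)).filter (IsOpenParsing W),
      parseVal tightCoeff L := by
  rw [Finset.sum_filter, candidates, Finset.sum_image, openVal, Finset.sum_sigma]
  intro p _ q _ h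
  exact List.ofFn_inj'.mp (List.map_injective_iff.mpr wordOf_injective h)

noncomputable def leftOpenParsings (U : PWord) : Finset (List PWord) :=
  (candidates (U.length + 1)).filter (IsLeftOpenParsing U)

lemma mem_leftOpenParsings {U : PWord} {L : List PWord} :
    L ∈ leftOpenParsings U ↔ IsLeftOpenParsing U L := by
  simp only [leftOpenParsings, Finset.mem_filter, and_iff_right_iff_imp]
  exact fun h => mem_candidates_of_length_lt (Nat.lt_succ_of_le h.length_le)
    fun w hw => h.mem_tightWords hw

noncomputable def leftOpenVal (U : PWord) : Polynomial ℤ :=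
  ∑ L ∈ leftOpenParsings U, parseVal tightCoeff L

lemma parseVal_append (c : PWord → ℤ) (L₁ L₂ : List PWord) :
    parseVal c (L₁ ++ L₂) = parseVal c L₁ * parseVal c L₂ := by
  simp only [parseVal, List.map_append, List.prod_append, List.sum_append, pow_add, map_mul]
  ring

lemma parseVal_replicate_X (m : ℕ) : parseVal tightCoeff (List.replicate m [X]) = 1 := by
  simp [parseVal, tightCoeff, wordWt, List.map_replicate]

lemma openVal_eq_leftOpenVal (W : PWord) : openVal W = leftOpenVal W := by
  obtain ⟨m, hm⟩ := exists_isLeftOpenParsing_iff_isOpenParsing W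
  have himage : leftOpenParsings W = ((candidates (W.length + 3)).filter (IsOpenParsing W)).image
      (· ++ List.replicate m [X]) := by
    ext L
    simp only [mem_leftOpenParsings, hm, Finset.mem_image, Finset.mem_filter]
    constructor
    · rintro ⟨L₁, rfl, h₁⟩
      have hlen := (isOpenParsing_iff.mp h₁).length_le.trans (length_core_le W)
      exact ⟨L₁, ⟨mem_candidates_of_length_lt (by omega) fun w hw => h₁.1.1 w hw, h₁⟩, rfl⟩
    · rintro ⟨L₁, ⟨-, h₁⟩, rfl⟩
      exact ⟨L₁, rfl, h₁⟩
  rw [openVal_eq_sum, leftOpenVal, himage,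
    Finset.sum_image fun _ _ _ _ h => List.append_cancel_right h]
  simp [parseVal_append, parseVal_replicate_X]

lemma leftOpenVal_append {W s : PWord} (hs : 3 ≤ s.length) (hA : s.getLast? = some A) :
    leftOpenVal (W ++ s) = ∑ w ∈ tightWords.toFinset.filter (· <:+ s),
      if Bad [X] w ∧ (W ++ s.rdrop w.length).getLast?.getD X = X then 0
      else leftOpenVal (W ++ s.rdrop w.length) * parseVal tightCoeff [w] := by
  have hset : leftOpenParsings (W ++ s) = (tightWords.toFinset.filter (· <:+ s)).biUnion fun w =>
      ((leftOpenParsings (W ++ s.rdrop w.length)).filter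
        fun L₀ => ¬ Bad (L₀.getLast?.getD [X]) w).image (· ++ [w]) := by
    ext L
    simp only [mem_leftOpenParsings, isLeftOpenParsing_append_iff hs hA, Finset.mem_biUnion,
      Finset.mem_filter, List.mem_toFinset, Finset.mem_image]
    constructor
    · rintro ⟨w, hw, hws, L₀, rfl, h₀, hb⟩
      exact ⟨w, ⟨hw, hws⟩, L₀, ⟨h₀, hb⟩, rfl⟩
    · rintro ⟨w, ⟨hw, hws⟩, L₀, ⟨h₀, hb⟩, rfl⟩
      exact ⟨w, hw, hws, L₀, rfl, h₀, hb⟩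
  have hdisj : ((tightWords.toFinset.filter (· <:+ s) : Finset PWord) : Set PWord).PairwiseDisjoint
      fun w => ((leftOpenParsings (W ++ s.rdrop w.length)).filter
        fun L₀ => ¬ Bad (L₀.getLast?.getD [X]) w).image (· ++ [w]) := by
    intro w₁ _ w₂ _ hne
    simp only [Function.onFun]
    rw [Finset.disjoint_left]
    rintro L h₁ h₂
    obtain ⟨L₁, -, rfl⟩ := Finset.mem_image.mp h₁
    obtain ⟨L₂, -, h⟩ := Finset.mem_image.mp h₂
    exact hne (List.singleton_inj.mp (List.append_inj' h rfl).2.symm)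
  rw [leftOpenVal, hset, Finset.sum_biUnion hdisj]
  refine Finset.sum_congr rfl fun w _ => ?_
  rw [Finset.sum_image fun _ _ _ _ h => List.append_cancel_right h, Finset.sum_filter]
  have key : ∀ L₀ ∈ leftOpenParsings (W ++ s.rdrop w.length), Bad (L₀.getLast?.getD [X]) w ↔
      Bad [X] w ∧ (W ++ s.rdrop w.length).getLast?.getD X = X := fun L₀ h => by
    rw [bad_iff, (mem_leftOpenParsings.mp h).getLast?_getD_eq_X_iff, and_comm]
  split_ifs with hb
  · exact Finset.sum_eq_zero fun L₀ h => if_neg (by rw [not_not, key L₀ h]; exact hb)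
  · rw [leftOpenVal, Finset.sum_mul]
    exact Finset.sum_congr rfl fun L₀ h => by
      rw [if_pos (by rw [key L₀ h]; exact hb), parseVal_append]

lemma leftOpenVal_append_AAA (W : PWord) :
    leftOpenVal (W ++ [A, A, A]) = -(Polynomial.X * leftOpenVal W) := by
  rw [leftOpenVal_append (by decide) rfl,
    show tightWords.toFinset.filter (· <:+ [A, A, A]) = {[A, A, A]} by decide]
  simp [Bad, parseVal, tightCoeff, wordWt, List.rdrop, mul_comm]

lemma leftOpenVal_append_XAA (W : PWord) :
    leftOpenVal (W ++ [X, A, A]) = Polynomial.X * leftOpenVal W := by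
  rw [leftOpenVal_append (by decide) rfl,
    show tightWords.toFinset.filter (· <:+ [X, A, A]) = {[X, A, A]} by decide]
  simp [Bad, parseVal, tightCoeff, wordWt, List.rdrop, mul_comm]

lemma leftOpenVal_append_XXA (W : PWord) :
    leftOpenVal (W ++ [X, X, A]) = -(Polynomial.X * leftOpenVal W) := by
  rw [leftOpenVal_append (by decide) rfl,
    show tightWords.toFinset.filter (· <:+ [X, X, A]) = {[X, A], [X, X, A]} by decide]
  simp [Bad, parseVal, tightCoeff, wordWt, List.rdrop, mul_comm]

lemma leftOpenVal_append_AXA (W : PWord) : leftOpenVal (W ++ [A, X, A]) =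
    Polynomial.X * leftOpenVal (W ++ [A]) + 2 * Polynomial.X * leftOpenVal W := by
  rw [leftOpenVal_append (by decide) rfl,
    show tightWords.toFinset.filter (· <:+ [A, X, A]) = {[X, A], [A, X, A]} by decide]
  simp [Bad, parseVal, tightCoeff, wordWt, List.rdrop, mul_comm]

lemma leftOpenVal_append_ABA (W : PWord) : leftOpenVal (W ++ [A, B, A]) =
    -(Polynomial.X * leftOpenVal (W ++ [A])) - Polynomial.X * leftOpenVal W := by
  rw [leftOpenVal_append (by decide) rfl,
    show tightWords.toFinset.filter (· <:+ [A, B, A]) = {[B, A], [A, B, A]} by decide]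
  simp [Bad, parseVal, tightCoeff, wordWt, List.rdrop, mul_comm, sub_eq_add_neg]

end TightPuzzle

open PLetter in
/-- **Right identities** for open values in the tight puzzle. -/
theorem right_identities (W : PWord) :
    openVal (W ++ [A, A, A]) + Polynomial.X * openVal W = 0 ∧
    openVal (W ++ [X, A, A]) - Polynomial.X * openVal W = 0 ∧
    openVal (W ++ [X, X, A]) + Polynomial.X * openVal W = 0 ∧
    openVal (W ++ [A, X, A]) - Polynomial.X * openVal (W ++ [A])
      - 2 * Polynomial.X * openVal W = 0 ∧
    openVal (W ++ [A, B, A]) + Polynomial.X * openVal (W ++ [A])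
      + Polynomial.X * openVal W = 0 := by
  simp only [TightPuzzle.openVal_eq_leftOpenVal, TightPuzzle.leftOpenVal_append_AAA,
    TightPuzzle.leftOpenVal_append_XAA, TightPuzzle.leftOpenVal_append_XXA,
    TightPuzzle.leftOpenVal_append_AXA, TightPuzzle.leftOpenVal_append_ABA]
  refine ⟨?_, ?_, ?_, ?_, ?_⟩ <;> ring
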